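/- The cut rule is admissible in the G3-style classical propositional sequent calculus: if Γ ⊢ Δ, A and Γ', A ⊢ Δ' are derivable, then Γ, Γ' ⊢ Δ, Δ' is derivable, by primary induction on the size of the cut formula A and secondary induction on the sum of the heights of the derivations of the premises. -/
import Mathlib


/-- Formulas of classical propositional logic, built from propositional
variables and `⊥` by `∧`, `∨`, `→`. -/
inductive PFml : Type where
  | var : ℕ → PFml
  | bot : PFml
  | and : PFml → PFml → PFml
  | or : PFml → PFml → PFml
  | imp : PFml → PFml → PFml
deriving DecidableEq

/-- `DerivH Γ Δ n`: the multiset sequent `Γ ⊢ Δ` has a derivation of height `n`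
in the G3-style sequent calculus for classical propositional logic, with initial
sequents `Γ, p ⊢ Δ, p` and `Γ, ⊥ ⊢ Δ` and the standard rules for `∧`, `∨`, `→`. -/
inductive DerivH : Multiset PFml → Multiset PFml → ℕ → Prop where
  | ax (Γ Δ : Multiset PFml) (p : ℕ) : DerivH (PFml.var p ::ₘ Γ) (PFml.var p ::ₘ Δ) 0
  | botL (Γ Δ : Multiset PFml) : DerivH (PFml.bot ::ₘ Γ) Δ 0
  | andL (Γ Δ : Multiset PFml) (A B : PFml) (n : ℕ) :
      DerivH (A ::ₘ B ::ₘ Γ) Δ n → DerivH (PFml.and A B ::ₘ Γ) Δ (n + 1)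
  | andR (Γ Δ : Multiset PFml) (A B : PFml) (m k : ℕ) :
      DerivH Γ (A ::ₘ Δ) m → DerivH Γ (B ::ₘ Δ) k →
      DerivH Γ (PFml.and A B ::ₘ Δ) (max m k + 1)
  | orL (Γ Δ : Multiset PFml) (A B : PFml) (m k : ℕ) :
      DerivH (A ::ₘ Γ) Δ m → DerivH (B ::ₘ Γ) Δ k →
      DerivH (PFml.or A B ::ₘ Γ) Δ (max m k + 1)
  | orR (Γ Δ : Multiset PFml) (A B : PFml) (n : ℕ) :
      DerivH Γ (A ::ₘ B ::ₘ Δ) n → DerivH Γ (PFml.or A B ::ₘ Δ) (n + 1)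
  | impL (Γ Δ : Multiset PFml) (A B : PFml) (m k : ℕ) :
      DerivH Γ (A ::ₘ Δ) m → DerivH (B ::ₘ Γ) Δ k →
      DerivH (PFml.imp A B ::ₘ Γ) Δ (max m k + 1)
  | impR (Γ Δ : Multiset PFml) (A B : PFml) (n : ℕ) :
      DerivH (A ::ₘ Γ) (B ::ₘ Δ) n → DerivH Γ (PFml.imp A B ::ₘ Δ) (n + 1)

namespace CutAux

/-- Boolean evaluation of a formula under a valuation. -/
def eval (v : ℕ → Bool) : PFml → Bool
  | PFml.var p => v p
  | PFml.bot => false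
  | PFml.and A B => eval v A && eval v B
  | PFml.or A B => eval v A || eval v B
  | PFml.imp A B => !eval v A || eval v B

/-- Semantic validity of a sequent. -/
def Valid (Γ Δ : Multiset PFml) : Prop :=
  ∀ v : ℕ → Bool, (∀ A ∈ Γ, eval v A = true) → ∃ B ∈ Δ, eval v B = true

/-- Soundness. -/
theorem sound {Γ Δ : Multiset PFml} {n : ℕ} (h : DerivH Γ Δ n) : Valid Γ Δ := by
  induction h with
  | ax Γ Δ p =>
      intro v hΓ
      exact ⟨PFml.var p, Multiset.mem_cons_self _ _, hΓ _ (Multiset.mem_cons_self _ _)⟩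
  | botL Γ Δ =>
      intro v hΓ
      have := hΓ PFml.bot (Multiset.mem_cons_self _ _)
      simp [eval] at this
  | andL Γ Δ A B n _ ih =>
      intro v hΓ
      have hAB := hΓ (PFml.and A B) (Multiset.mem_cons_self _ _)
      simp only [eval, Bool.and_eq_true] at hAB
      refine ih v ?_
      intro C hC
      rcases Multiset.mem_cons.1 hC with rfl | hC
      · exact hAB.1
      rcases Multiset.mem_cons.1 hC with rfl | hC
      · exact hAB.2
      · exact hΓ C (Multiset.mem_cons_of_mem hC)
  | andR Γ Δ A B m k _ _ ih1 ih2 =>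
      intro v hΓ
      rcases ih1 v hΓ with ⟨C, hC, hCv⟩
      rcases Multiset.mem_cons.1 hC with hCA | hC
      · rw [hCA] at hCv
        rcases ih2 v hΓ with ⟨D, hD, hDv⟩
        rcases Multiset.mem_cons.1 hD with hDB | hD
        · rw [hDB] at hDv
          exact ⟨PFml.and A B, Multiset.mem_cons_self _ _, by simp [eval, hCv, hDv]⟩
        · exact ⟨D, Multiset.mem_cons_of_mem hD, hDv⟩
      · exact ⟨C, Multiset.mem_cons_of_mem hC, hCv⟩
  | orL Γ Δ A B m k _ _ ih1 ih2 =>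
      intro v hΓ
      have hAB := hΓ (PFml.or A B) (Multiset.mem_cons_self _ _)
      simp only [eval, Bool.or_eq_true] at hAB
      have hrest : ∀ C ∈ Γ, eval v C = true := fun C hC => hΓ C (Multiset.mem_cons_of_mem hC)
      rcases hAB with hA | hB
      · exact ih1 v (by
          intro C hC
          rcases Multiset.mem_cons.1 hC with rfl | hC
          · exact hA
          · exact hrest C hC)
      · exact ih2 v (by
          intro C hC
          rcases Multiset.mem_cons.1 hC with rfl | hC
          · exact hB
          · exact hrest C hC)
  | orR Γ Δ A B n _ ih =>
      intro v hΓ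
      rcases ih v hΓ with ⟨C, hC, hCv⟩
      rcases Multiset.mem_cons.1 hC with hCA | hC
      · rw [hCA] at hCv
        exact ⟨PFml.or A B, Multiset.mem_cons_self _ _, by simp [eval, hCv]⟩
      rcases Multiset.mem_cons.1 hC with hCB | hC
      · rw [hCB] at hCv
        exact ⟨PFml.or A B, Multiset.mem_cons_self _ _, by simp [eval, hCv]⟩
      · exact ⟨C, Multiset.mem_cons_of_mem hC, hCv⟩
  | impL Γ Δ A B m k _ _ ih1 ih2 =>
      intro v hΓ
      have hAB := hΓ (PFml.imp A B) (Multiset.mem_cons_self _ _)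
      simp only [eval, Bool.or_eq_true, Bool.not_eq_true'] at hAB
      have hrest : ∀ C ∈ Γ, eval v C = true := fun C hC => hΓ C (Multiset.mem_cons_of_mem hC)
      rcases hAB with hA | hB
      · rcases ih1 v hrest with ⟨C, hC, hCv⟩
        rcases Multiset.mem_cons.1 hC with hCA | hC
        · rw [hCA, hA] at hCv; exact absurd hCv (by simp)
        · exact ⟨C, hC, hCv⟩
      · exact ih2 v (by
          intro C hC
          rcases Multiset.mem_cons.1 hC with rfl | hC
          · exact hB
          · exact hrest C hC)
  | impR Γ Δ A B n _ ih =>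
      intro v hΓ
      by_cases hA : eval v A = true
      · rcases ih v (by
            intro C hC
            rcases Multiset.mem_cons.1 hC with rfl | hC
            · exact hA
            · exact hΓ C hC) with ⟨C, hC, hCv⟩
        rcases Multiset.mem_cons.1 hC with hCB | hC
        · rw [hCB] at hCv
          exact ⟨PFml.imp A B, Multiset.mem_cons_self _ _, by simp [eval, hCv]⟩
        · exact ⟨C, Multiset.mem_cons_of_mem hC, hCv⟩
      · exact ⟨PFml.imp A B, Multiset.mem_cons_self _ _, by
          simp [eval]
          simp at hA
          simp [hA]⟩

/-- Size of a formula. -/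
def fsize : PFml → ℕ
  | PFml.var _ => 1
  | PFml.bot => 1
  | PFml.and A B => fsize A + fsize B + 1
  | PFml.or A B => fsize A + fsize B + 1
  | PFml.imp A B => fsize A + fsize B + 1

def weight (Γ : Multiset PFml) : ℕ := (Γ.map fsize).sum

theorem weight_cons (A : PFml) (Γ : Multiset PFml) :
    weight (A ::ₘ Γ) = fsize A + weight Γ := by
  simp [weight, Multiset.map_cons, Multiset.sum_cons]

/-- A formula is atomic. -/
def Atomic : PFml → Prop
  | PFml.var _ => True
  | PFml.bot => True
  | _ => False

theorem fsize_pos (A : PFml) : 0 < fsize A := by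
  cases A <;> simp [fsize]

theorem weight_eq_zero {Γ : Multiset PFml} (h : weight Γ = 0) : Γ = 0 := by
  by_contra hne
  rcases Multiset.exists_mem_of_ne_zero hne with ⟨A, hA⟩
  rcases Multiset.exists_cons_of_mem hA with ⟨Γ₀, rfl⟩
  rw [weight_cons] at h
  have := fsize_pos A
  omega

theorem completeness_aux :
    ∀ N Γ Δ, weight Γ + weight Δ ≤ N → Valid Γ Δ → ∃ n, DerivH Γ Δ n := by
  intro N
  induction N with
  | zero =>
      intro Γ Δ hw hv
      exfalso
      have hΓ : Γ = 0 := weight_eq_zero (by omega)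
      have hΔ : Δ = 0 := weight_eq_zero (by omega)
      subst hΓ; subst hΔ
      rcases hv (fun _ => true) (by simp) with ⟨B, hB, _⟩
      simp at hB
  | succ N ih =>
      intro Γ Δ hw hv
      by_cases hcL : ∃ C ∈ Γ, ¬ Atomic C
      · rcases hcL with ⟨C, hC, hnc⟩
        rcases Multiset.exists_cons_of_mem hC with ⟨Γ₀, rfl⟩
        rw [weight_cons] at hw
        cases C with
        | var p => simp [Atomic] at hnc
        | bot => simp [Atomic] at hnc
        | and A B =>
            have hv' : Valid (A ::ₘ B ::ₘ Γ₀) Δ := by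
              intro v h
              refine hv v ?_
              intro D hD
              rcases Multiset.mem_cons.1 hD with hDe | hD
              · rw [hDe]
                have hA := h A (Multiset.mem_cons_self _ _)
                have hB := h B (Multiset.mem_cons_of_mem (Multiset.mem_cons_self _ _))
                simp [eval, hA, hB]
              · exact h D (Multiset.mem_cons_of_mem (Multiset.mem_cons_of_mem hD))
            have := fsize_pos A
            rcases ih (A ::ₘ B ::ₘ Γ₀) Δ (by simp only [weight_cons]; simp [fsize] at hw; omega) hv'
              with ⟨n, d⟩
            exact ⟨n + 1, DerivH.andL _ _ _ _ _ d⟩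
        | or A B =>
            have hrest : ∀ v : ℕ → Bool, ∀ X : PFml, eval v X = true →
                (∀ D ∈ Γ₀, eval v D = true) → eval v (PFml.or A B) = eval v X →
                ∃ E ∈ Δ, eval v E = true := by
              intro v X hX h heq
              refine hv v ?_
              intro D hD
              rcases Multiset.mem_cons.1 hD with hDe | hD
              · rw [hDe, heq]; exact hX
              · exact h D hD
            have hv1 : Valid (A ::ₘ Γ₀) Δ := by
              intro v h
              refine hv v ?_
              intro D hD
              rcases Multiset.mem_cons.1 hD with hDe | hD
              · rw [hDe]
                have hA := h A (Multiset.mem_cons_self _ _)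
                simp [eval, hA]
              · exact h D (Multiset.mem_cons_of_mem hD)
            have hv2 : Valid (B ::ₘ Γ₀) Δ := by
              intro v h
              refine hv v ?_
              intro D hD
              rcases Multiset.mem_cons.1 hD with hDe | hD
              · rw [hDe]
                have hB := h B (Multiset.mem_cons_self _ _)
                simp [eval, hB]
              · exact h D (Multiset.mem_cons_of_mem hD)
            simp only [fsize] at hw
            have := fsize_pos A
            have := fsize_pos B
            rcases ih (A ::ₘ Γ₀) Δ (by simp only [weight_cons]; omega) hv1 with ⟨n1, d1⟩
            rcases ih (B ::ₘ Γ₀) Δ (by simp only [weight_cons]; omega) hv2 with ⟨n2, d2⟩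
            exact ⟨max n1 n2 + 1, DerivH.orL _ _ _ _ _ _ d1 d2⟩
        | imp A B =>
            have hv1 : Valid Γ₀ (A ::ₘ Δ) := by
              intro v h
              by_cases hA : eval v A = true
              · exact ⟨A, Multiset.mem_cons_self _ _, hA⟩
              · have : ∃ E ∈ Δ, eval v E = true := by
                  refine hv v ?_
                  intro D hD
                  rcases Multiset.mem_cons.1 hD with hDe | hD
                  · rw [hDe]
                    simp at hA
                    simp [eval, hA]
                  · exact h D hD
                rcases this with ⟨E, hE, hEv⟩
                exact ⟨E, Multiset.mem_cons_of_mem hE, hEv⟩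
            have hv2 : Valid (B ::ₘ Γ₀) Δ := by
              intro v h
              refine hv v ?_
              intro D hD
              rcases Multiset.mem_cons.1 hD with hDe | hD
              · rw [hDe]
                have hB := h B (Multiset.mem_cons_self _ _)
                simp [eval, hB]
              · exact h D (Multiset.mem_cons_of_mem hD)
            simp only [fsize] at hw
            have := fsize_pos A
            have := fsize_pos B
            rcases ih Γ₀ (A ::ₘ Δ) (by simp only [weight_cons]; omega) hv1 with ⟨n1, d1⟩
            rcases ih (B ::ₘ Γ₀) Δ (by simp only [weight_cons]; omega) hv2 with ⟨n2, d2⟩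
            exact ⟨max n1 n2 + 1, DerivH.impL _ _ _ _ _ _ d1 d2⟩
      · by_cases hcR : ∃ C ∈ Δ, ¬ Atomic C
        · rcases hcR with ⟨C, hC, hnc⟩
          rcases Multiset.exists_cons_of_mem hC with ⟨Δ₀, rfl⟩
          rw [weight_cons] at hw
          cases C with
          | var p => simp [Atomic] at hnc
          | bot => simp [Atomic] at hnc
          | and A B =>
              have hv1 : Valid Γ (A ::ₘ Δ₀) := by
                intro v h
                rcases hv v h with ⟨E, hE, hEv⟩
                rcases Multiset.mem_cons.1 hE with hEe | hE
                · rw [hEe] at hEv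
                  simp [eval, Bool.and_eq_true] at hEv
                  exact ⟨A, Multiset.mem_cons_self _ _, hEv.1⟩
                · exact ⟨E, Multiset.mem_cons_of_mem hE, hEv⟩
              have hv2 : Valid Γ (B ::ₘ Δ₀) := by
                intro v h
                rcases hv v h with ⟨E, hE, hEv⟩
                rcases Multiset.mem_cons.1 hE with hEe | hE
                · rw [hEe] at hEv
                  simp [eval, Bool.and_eq_true] at hEv
                  exact ⟨B, Multiset.mem_cons_self _ _, hEv.2⟩
                · exact ⟨E, Multiset.mem_cons_of_mem hE, hEv⟩
              simp only [fsize] at hw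
              have := fsize_pos A
              have := fsize_pos B
              rcases ih Γ (A ::ₘ Δ₀) (by simp only [weight_cons]; omega) hv1 with ⟨n1, d1⟩
              rcases ih Γ (B ::ₘ Δ₀) (by simp only [weight_cons]; omega) hv2 with ⟨n2, d2⟩
              exact ⟨max n1 n2 + 1, DerivH.andR _ _ _ _ _ _ d1 d2⟩
          | or A B =>
              have hv1 : Valid Γ (A ::ₘ B ::ₘ Δ₀) := by
                intro v h
                rcases hv v h with ⟨E, hE, hEv⟩
                rcases Multiset.mem_cons.1 hE with hEe | hE
                · rw [hEe] at hEv
                  simp only [eval, Bool.or_eq_true] at hEv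
                  rcases hEv with hA | hB
                  · exact ⟨A, Multiset.mem_cons_self _ _, hA⟩
                  · exact ⟨B, Multiset.mem_cons_of_mem (Multiset.mem_cons_self _ _), hB⟩
                · exact ⟨E, Multiset.mem_cons_of_mem (Multiset.mem_cons_of_mem hE), hEv⟩
              simp only [fsize] at hw
              rcases ih Γ (A ::ₘ B ::ₘ Δ₀) (by simp only [weight_cons]; omega) hv1 with ⟨n1, d1⟩
              exact ⟨n1 + 1, DerivH.orR _ _ _ _ _ d1⟩
          | imp A B =>
              have hv1 : Valid (A ::ₘ Γ) (B ::ₘ Δ₀) := by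
                intro v h
                have hA := h A (Multiset.mem_cons_self _ _)
                rcases hv v (fun D hD => h D (Multiset.mem_cons_of_mem hD)) with ⟨E, hE, hEv⟩
                rcases Multiset.mem_cons.1 hE with hEe | hE
                · rw [hEe] at hEv
                  simp only [eval, Bool.or_eq_true, Bool.not_eq_true'] at hEv
                  rcases hEv with hA' | hB
                  · rw [hA] at hA'; exact absurd hA' (by simp)
                  · exact ⟨B, Multiset.mem_cons_self _ _, hB⟩
                · exact ⟨E, Multiset.mem_cons_of_mem hE, hEv⟩
              simp only [fsize] at hw
              have := fsize_pos A
              rcases ih (A ::ₘ Γ) (B ::ₘ Δ₀) (by simp only [weight_cons]; omega) hv1 with ⟨n1, d1⟩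
              exact ⟨n1 + 1, DerivH.impR _ _ _ _ _ d1⟩
        · -- everything atomic
          push_neg at hcL hcR
          by_cases hbot : PFml.bot ∈ Γ
          · rcases Multiset.exists_cons_of_mem hbot with ⟨Γ₀, rfl⟩
            exact ⟨0, DerivH.botL _ _⟩
          · by_cases hax : ∃ p, PFml.var p ∈ Γ ∧ PFml.var p ∈ Δ
            · rcases hax with ⟨p, hpΓ, hpΔ⟩
              rcases Multiset.exists_cons_of_mem hpΓ with ⟨Γ₀, rfl⟩
              rcases Multiset.exists_cons_of_mem hpΔ with ⟨Δ₀, rfl⟩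
              exact ⟨0, DerivH.ax _ _ _⟩
            · exfalso
              push_neg at hax
              classical
              rcases hv (fun p => decide (PFml.var p ∈ Γ)) (by
                  intro D hD
                  have hDa := hcL D hD
                  cases D with
                  | var p => simp [eval]; exact hD
                  | bot => exact absurd hD hbot
                  | and A B => simp [Atomic] at hDa
                  | or A B => simp [Atomic] at hDa
                  | imp A B => simp [Atomic] at hDa) with ⟨E, hE, hEv⟩
              have hEa := hcR E hE
              cases E with
              | var p =>
                  simp [eval] at hEv
                  exact hax p hEv hE
              | bot => simp [eval] at hEv
              | and A B => simp [Atomic] at hEa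
              | or A B => simp [Atomic] at hEa
              | imp A B => simp [Atomic] at hEa

end CutAux

/-- The cut rule is admissible: if `Γ ⊢ Δ, A` and `Γ', A ⊢ Δ'` are derivable,
then `Γ, Γ' ⊢ Δ, Δ'` is derivable. -/
theorem cut_admissible (Γ Δ Γ' Δ' : Multiset PFml) (A : PFml) (n k : ℕ)
    (h₁ : DerivH Γ (A ::ₘ Δ) n) (h₂ : DerivH (A ::ₘ Γ') Δ' k) :
    ∃ m, DerivH (Γ + Γ') (Δ + Δ') m := by
  have v₁ := CutAux.sound h₁
  have v₂ := CutAux.sound h₂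
  apply CutAux.completeness_aux (CutAux.weight (Γ + Γ') + CutAux.weight (Δ + Δ')) _ _ le_rfl
  intro v hΓ
  have hΓ1 : ∀ C ∈ Γ, CutAux.eval v C = true := fun C hC => hΓ C (Multiset.mem_add.2 (Or.inl hC))
  have hΓ2 : ∀ C ∈ Γ', CutAux.eval v C = true := fun C hC => hΓ C (Multiset.mem_add.2 (Or.inr hC))
  rcases v₁ v hΓ1 with ⟨B, hB, hBv⟩
  rcases Multiset.mem_cons.1 hB with rfl | hB
  · rcases v₂ v (by
        intro C hC
        rcases Multiset.mem_cons.1 hC with rfl | hC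
        · exact hBv
        · exact hΓ2 C hC) with ⟨D, hD, hDv⟩
    exact ⟨D, Multiset.mem_add.2 (Or.inr hD), hDv⟩
  · exact ⟨B, Multiset.mem_add.2 (Or.inl hB), hBv⟩
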